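/- arXiv:2509.21025 — 3 statements merged into one kernel-verified Lean document; each statement's English description precedes it below -/
import Mathlib

section
/- Let φ : (0,R] → [0,∞) be a nondecreasing differentiable function, and suppose there exist constants a > 0 and A ≥ 0 such that φ(r) ≤ a·r·φ'(r) + A·r^{1/a} for all r ∈ (0,R]. Then there exists a constant C > 0 (depending only on a, A, R, φ(R)) such that φ(r) ≤ C·r^{1/a}·log(R·e^{1+a}/r) for all r ∈ (0,R]. -/
open Set

theorem stmt1 (R a A : ℝ) (φ φ' : ℝ → ℝ) (hR : 0 < R)
    (hφ0 : ∀ r ∈ Ioc (0:ℝ) R, 0 ≤ φ r)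
    (hmono : MonotoneOn φ (Ioc (0:ℝ) R))
    (hderiv : ∀ r ∈ Ioc (0:ℝ) R, HasDerivAt φ (φ' r) r)
    (ha : 0 < a) (hA : 0 ≤ A)
    (hineq : ∀ r ∈ Ioc (0:ℝ) R, φ r ≤ a * r * φ' r + A * r ^ (1/a)) :
    ∃ C > 0, ∀ r ∈ Ioc (0:ℝ) R,
      φ r ≤ C * r ^ (1/a) * Real.log (R * Real.exp (1 + a) / r) := by
  have hRmem : R ∈ Ioc (0:ℝ) R := ⟨hR, le_refl R⟩
  set b : ℝ := 1/a with hb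
  have hbpos : 0 < b := by positivity
  set g : ℝ → ℝ := fun r => φ r * r ^ (-b) + (A/a) * Real.log r with hgdef
  have hg' : ∀ r ∈ Ioc (0:ℝ) R, HasDerivAt g
      (φ' r * r ^ (-b) + φ r * (-b * r ^ (-b - 1)) + (A/a) * r⁻¹) r := by
    intro r hr
    have hr0 : (0:ℝ) < r := hr.1
    have h1 : HasDerivAt (fun x : ℝ => x ^ (-b)) (-b * r ^ (-b - 1)) r :=
      Real.hasDerivAt_rpow_const (Or.inl hr0.ne')
    have h2 := (Real.hasDerivAt_log hr0.ne').const_mul (A/a)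
    exact ((hderiv r hr).mul h1).add h2
  have hg'nn : ∀ r ∈ Ioc (0:ℝ) R,
      0 ≤ φ' r * r ^ (-b) + φ r * (-b * r ^ (-b - 1)) + (A/a) * r⁻¹ := by
    intro r hr
    have hr0 : (0:ℝ) < r := hr.1
    have hs : (0:ℝ) < r ^ b := Real.rpow_pos_of_pos hr0 b
    have hneg : r ^ (-b) = (r ^ b)⁻¹ := Real.rpow_neg hr0.le b
    have hneg1 : r ^ (-b - 1) = (r ^ b)⁻¹ / r := by
      rw [show (-b - 1 : ℝ) = -b - 1 from rfl, Real.rpow_sub hr0, Real.rpow_one, hneg]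
    have hineqr := hineq r hr
    have hkey : φ' r * r ^ (-b) + φ r * (-b * r ^ (-b - 1)) + (A/a) * r⁻¹
        = (a * r * φ' r + A * r ^ b - φ r) / (a * r ^ b * r) := by
      rw [hneg, hneg1, hb]
      field_simp
      ring
    rw [hkey]
    apply div_nonneg
    · linarith [hineqr]
    · positivity
  have hgmono : MonotoneOn g (Ioc (0:ℝ) R) := by
    apply monotoneOn_of_deriv_nonneg (convex_Ioc 0 R)
    · intro r hr
      exact (hg' r hr).continuousAt.continuousWithinAt
    · rw [interior_Ioc]
      intro r hr
      exact (hg' r (Ioo_subset_Ioc_self hr)).differentiableAt.differentiableWithinAt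
    · rw [interior_Ioc]
      intro r hr
      rw [(hg' r (Ioo_subset_Ioc_self hr)).deriv]
      exact hg'nn r (Ioo_subset_Ioc_self hr)
  have hD : (0:ℝ) ≤ φ R * R ^ (-b) := by
    have := hφ0 R hRmem
    have : (0:ℝ) < R ^ (-b) := Real.rpow_pos_of_pos hR _
    positivity
  have hAa : (0:ℝ) ≤ A / a := by positivity
  refine ⟨φ R * R ^ (-b) + A/a + 1, by positivity, ?_⟩
  intro r hr
  have hr0 : (0:ℝ) < r := hr.1
  have hrb : (0:ℝ) < r ^ b := Real.rpow_pos_of_pos hr0 b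
  have hgle : g r ≤ g R := hgmono hr hRmem hr.2
  have hL : Real.log (R * Real.exp (1 + a) / r) = Real.log R + (1 + a) - Real.log r := by
    rw [Real.log_div (by positivity) hr0.ne', Real.log_mul hR.ne' (Real.exp_pos _).ne',
      Real.log_exp]
  set L : ℝ := Real.log (R * Real.exp (1 + a) / r) with hLdef
  have hlogle : Real.log r ≤ Real.log R := Real.log_le_log hr0 hr.2
  have hL1 : 1 ≤ L := by rw [hL]; linarith
  have hL2 : Real.log R - Real.log r ≤ L := by rw [hL]; linarith
  -- from hgle : φ r * r^(-b) ≤ φ R * R^(-b) + (A/a) * (log R - log r)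
  have h1 : φ r * r ^ (-b) ≤ φ R * R ^ (-b) + (A/a) * (Real.log R - Real.log r) := by
    simp only [hgdef] at hgle
    linarith [hgle]
  have h2 : φ R * R ^ (-b) + (A/a) * (Real.log R - Real.log r)
      ≤ (φ R * R ^ (-b) + A/a + 1) * L := by
    nlinarith [mul_le_mul_of_nonneg_left hL2 hAa, mul_le_mul_of_nonneg_left hL1 hD]
  have hneg : r ^ (-b) = (r ^ b)⁻¹ := Real.rpow_neg hr0.le b
  have h3 : φ r ≤ (φ R * R ^ (-b) + A/a + 1) * L * r ^ b := by
    have := le_trans h1 h2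
    rw [hneg] at this
    calc φ r = φ r * (r ^ b)⁻¹ * r ^ b := by field_simp
      _ ≤ (φ R * R ^ (-b) + A/a + 1) * L * r ^ b :=
        mul_le_mul_of_nonneg_right this hrb.le
  calc φ r ≤ (φ R * R ^ (-b) + A/a + 1) * L * r ^ b := h3
    _ = (φ R * R ^ (-b) + A/a + 1) * r ^ b * L := by ring
end

section
/- Let ψ_ε(t) = ∫_0^t φ_ε(s)/(s·log^Q(1/s)) ds for t ∈ (0, 1/e), where φ_ε(s) = 1/(1 + ε·2^{1/s}) and Q > 1, ε > 0. Then for all t ∈ (0, 1/e): ψ_ε(t) ≤ φ_ε(t)^{(Q−1)/Q} / ((Q−1)·log^{Q−1}(1/t)). -/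
/-!
Since `φ_ε` is increasing, `ψ_ε(t) ≤ φ_ε(t) ∫₀ᵗ ds / (s log^Q(1/s))`, and this integral equals
`1 / ((Q-1) log^{Q-1}(1/t))` because `log^{1-Q}(1/s) / (Q-1)` is an antiderivative of the integrand
that tends to `0` as `s → 0⁺`. Finally `φ_ε(t) ≤ φ_ε(t)^{(Q-1)/Q}` as `0 < φ_ε(t) ≤ 1`.
-/

/-- `φ_ε(s) = 1/(1 + ε·2^{1/s})`. -/
noncomputable def phiE (ε s : ℝ) : ℝ := 1 / (1 + ε * (2:ℝ) ^ (1/s))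

/-- `ψ_ε(t) = ∫₀ᵗ φ_ε(s)/(s·log^Q(1/s)) ds`. -/
noncomputable def psiE (ε Q t : ℝ) : ℝ :=
  ∫ s in (0:ℝ)..t, phiE ε s / (s * (Real.log (1/s)) ^ Q)

open Real Set Filter Topology MeasureTheory

lemma log_one_div_pos {s : ℝ} (hs : 0 < s) (hs1 : s < 1) : 0 < log (1 / s) :=
  log_pos (one_lt_one_div hs hs1)

section LogPowIntegral

variable {Q : ℝ}

lemma hasDerivAt_log_one_div_rpow_div (hQ : Q ≠ 1) {x : ℝ} (hx : 0 < x) (hx1 : x < 1) :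
    HasDerivAt (fun s => log (1 / s) ^ (1 - Q) / (Q - 1)) (1 / (x * log (1 / x) ^ Q)) x := by
  have hL := log_one_div_pos hx hx1
  have hlog : HasDerivAt (fun s => log (1 / s)) (-x⁻¹) x := by
    rw [show (fun s : ℝ => log (1 / s)) = fun s => -log s from
      funext fun s => by rw [one_div, log_inv]]
    exact (hasDerivAt_log hx.ne').neg
  refine ((hlog.rpow_const (p := 1 - Q) (Or.inl hL.ne')).div_const (Q - 1)).congr_deriv ?_
  rw [show 1 - Q - 1 = -Q by ring, rpow_neg hL.le]
  have hQ1 : Q - 1 ≠ 0 := sub_ne_zero.mpr hQ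
  field_simp
  ring

lemma tendsto_log_one_div_rpow_nhdsGT_zero (hQ : 1 < Q) :
    Tendsto (fun s => log (1 / s) ^ (1 - Q)) (𝓝[>] 0) (𝓝 0) := by
  have hL : Tendsto (fun s : ℝ => log (1 / s)) (𝓝[>] 0) atTop := by
    refine (tendsto_log_atTop.comp tendsto_inv_nhdsGT_zero).congr fun s => ?_
    rw [Function.comp_apply, one_div]
  refine ((tendsto_rpow_neg_atTop (sub_pos.mpr hQ)).comp hL).congr fun s => ?_
  rw [Function.comp_apply, neg_sub]

/-- At `s = 0` the function takes the value `0`, its limit, through the junk values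
`log (1 / 0) = log 0 = 0` and `0 ^ (1 - Q) = 0`. -/
lemma continuousOn_log_one_div_rpow_div (hQ : 1 < Q) {t : ℝ} (ht1 : t < 1) :
    ContinuousOn (fun s => log (1 / s) ^ (1 - Q) / (Q - 1)) (Icc 0 t) := by
  intro x hx
  rcases hx.1.eq_or_lt with rfl | hx0
  · refine ContinuousWithinAt.mono ?_ Icc_subset_Ici_self
    rw [← continuousWithinAt_Ioi_iff_Ici, ContinuousWithinAt]
    have h1Q : 1 - Q ≠ 0 := sub_ne_zero.mpr hQ.ne
    simpa [zero_rpow h1Q] using (tendsto_log_one_div_rpow_nhdsGT_zero hQ).div_const (Q - 1)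
  · exact (hasDerivAt_log_one_div_rpow_div hQ.ne' hx0
      (hx.2.trans_lt ht1)).continuousAt.continuousWithinAt

variable {t : ℝ}

lemma intervalIntegrable_one_div_mul_log_one_div_rpow (hQ : 1 < Q) (ht0 : 0 ≤ t) (ht1 : t < 1) :
    IntervalIntegrable (fun s => 1 / (s * log (1 / s) ^ Q)) volume 0 t := by
  refine (intervalIntegrable_iff_integrableOn_Ioc_of_le ht0).mpr ?_
  refine intervalIntegral.integrableOn_deriv_of_nonneg (continuousOn_log_one_div_rpow_div hQ ht1)
    (fun x hx => hasDerivAt_log_one_div_rpow_div hQ.ne' hx.1 (hx.2.trans ht1)) fun x hx => ?_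
  have := log_one_div_pos hx.1 (hx.2.trans ht1)
  have := hx.1
  positivity

lemma integral_one_div_mul_log_one_div_rpow (hQ : 1 < Q) (ht0 : 0 ≤ t) (ht1 : t < 1) :
    ∫ s in (0 : ℝ)..t, 1 / (s * log (1 / s) ^ Q) = log (1 / t) ^ (1 - Q) / (Q - 1) := by
  rw [intervalIntegral.integral_eq_sub_of_hasDerivAt_of_le ht0
    (continuousOn_log_one_div_rpow_div hQ ht1)
    (fun x hx => hasDerivAt_log_one_div_rpow_div hQ.ne' hx.1 (hx.2.trans ht1))
    (intervalIntegrable_one_div_mul_log_one_div_rpow hQ ht0 ht1)]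
  simp [zero_rpow (sub_ne_zero.mpr hQ.ne)]

end LogPowIntegral

section Truncation

variable {ε : ℝ}

lemma phiE_pos (hε : 0 ≤ ε) (s : ℝ) : 0 < phiE ε s := by
  have := rpow_pos_of_pos two_pos (1 / s)
  unfold phiE
  positivity

lemma phiE_le_one (hε : 0 ≤ ε) (s : ℝ) : phiE ε s ≤ 1 := by
  have := rpow_pos_of_pos two_pos (1 / s)
  unfold phiE
  rw [div_le_one (by positivity)]
  nlinarith

lemma phiE_monotoneOn (hε : 0 ≤ ε) : MonotoneOn (phiE ε) (Ioi 0) := by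
  intro s hs t _ hst
  have h2 : (2 : ℝ) ^ (1 / t) ≤ 2 ^ (1 / s) :=
    rpow_le_rpow_of_exponent_le one_le_two (one_div_le_one_div_of_le hs hst)
  have := rpow_pos_of_pos two_pos (1 / t)
  unfold phiE
  apply one_div_le_one_div_of_le (by positivity)
  nlinarith

lemma psiE_le_phiE_mul {Q t : ℝ} (hε : 0 ≤ ε) (hQ : 1 < Q) (ht0 : 0 < t) (ht1 : t < 1) :
    psiE ε Q t ≤ phiE ε t * (log (1 / t) ^ (1 - Q) / (Q - 1)) := by
  have hint := intervalIntegrable_one_div_mul_log_one_div_rpow hQ ht0.le ht1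
  rw [← integral_one_div_mul_log_one_div_rpow hQ ht0.le ht1, ← intervalIntegral.integral_const_mul,
    psiE, intervalIntegral.integral_of_le ht0.le, intervalIntegral.integral_of_le ht0.le]
  have hden : ∀ s ∈ Ioc 0 t, 0 < s * log (1 / s) ^ Q := fun s hs => by
    have := log_one_div_pos hs.1 (hs.2.trans_lt ht1)
    have := hs.1
    positivity
  refine integral_mono_of_nonneg ?_ (hint.1.const_mul _) ?_ <;>
    filter_upwards [ae_restrict_mem measurableSet_Ioc] with s hs
  · exact div_nonneg (phiE_pos hε s).le (hden s hs).le
  · rw [mul_one_div]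
    exact div_le_div_of_nonneg_right (phiE_monotoneOn hε hs.1 ht0 hs.2) (hden s hs).le

end Truncation

theorem stmt11 (Q ε : ℝ) (hQ : 1 < Q) (hε : 0 < ε) :
    ∀ t ∈ Set.Ioo (0:ℝ) (Real.exp (-1)),
      psiE ε Q t ≤ phiE ε t ^ ((Q - 1)/Q) / ((Q - 1) * (Real.log (1/t)) ^ (Q - 1)) := by
  rintro t ⟨ht0, hte⟩
  have ht1 : t < 1 := hte.trans (exp_lt_one_iff.mpr (by norm_num))
  have hL := log_one_div_pos ht0 ht1
  have hφ : phiE ε t ≤ phiE ε t ^ ((Q - 1) / Q) :=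
    self_le_rpow_of_le_one (phiE_pos hε.le t).le (phiE_le_one hε.le t)
      ((div_le_one (by linarith)).mpr (by linarith))
  have hg : log (1 / t) ^ (1 - Q) / (Q - 1) = 1 / ((Q - 1) * log (1 / t) ^ (Q - 1)) := by
    rw [show 1 - Q = -(Q - 1) by ring, rpow_neg hL.le]
    field_simp
  calc psiE ε Q t ≤ phiE ε t * (log (1 / t) ^ (1 - Q) / (Q - 1)) :=
        psiE_le_phiE_mul hε.le hQ ht0 ht1
    _ ≤ phiE ε t ^ ((Q - 1) / Q) * (log (1 / t) ^ (1 - Q) / (Q - 1)) := by gcongr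
    _ = _ := by rw [hg, mul_one_div]
end

section
/- Let Q ≥ 2, ε > 0, U a measurable subset of a measure space, and let J : U → ℝ, ρf : U → (0, ε) be measurable with J⁺, J⁻ the positive and negative parts of J. Assume ∫_{U_r} J⁺ dμ = ∫_{U_r} J⁻ dμ for almost every r ∈ (0, ε), where U_r = {x ∈ U : ρf(x) < r}, and both ∫_U J⁺/(ρf)^Q dμ and ∫_U J⁻/(ρf)^Q dμ are finite after subtracting ε^{-Q}∫_U J^± dμ. Then, by the layer-cake (Fubini–Tonelli) identity ∫_U J^±(x)·((ρf(x))^{-Q} − ε^{-Q}) dμ(x) = ∫_0^ε Q r^{-Q-1} (∫_{U_r} J^± dμ) dr, it follows that ∫_U J/(ρf)^Q dμ = (1/ε^Q)·∫_U J dμ. -/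
open MeasureTheory
open scoped ENNReal

lemma layer14 {Ω : Type*} [MeasurableSpace Ω] (μ : Measure Ω)
    (Q ε : ℝ) (hQ : 0 < Q) (hε : 0 < ε)
    (g ρf : Ω → ℝ) (hg : Measurable g) (hgnn : ∀ x, 0 ≤ g x) (hρf : Measurable ρf)
    (hρ : ∀ x, ρf x ∈ Set.Ioo 0 ε)
    (hgint : Integrable g μ) :
    (∫ x, g x * ((ρf x) ^ (-Q) - ε ^ (-Q)) ∂μ) =
      ∫ r in Set.Ioo (0:ℝ) ε, Q * r ^ (-Q - 1) * ∫ x in {x | ρf x < r}, g x ∂μ := by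
  have hQne : Q ≠ 0 := hQ.ne'
  -- nonnegativity of the difference
  have hdiff : ∀ x, (0:ℝ) ≤ (ρf x) ^ (-Q) - ε ^ (-Q) := by
    intro x
    have := Real.rpow_le_rpow_of_nonpos (hρ x).1 (le_of_lt (hρ x).2)
      (by linarith : -Q ≤ 0)
    linarith
  -- real integral computation on Ioo a ε
  have hIoo : ∀ a : ℝ, 0 < a → a < ε →
      (∫ r in Set.Ioo a ε, Q * r ^ (-Q - 1)) = a ^ (-Q) - ε ^ (-Q) := by
    intro a ha haε
    rw [← MeasureTheory.integral_Ioc_eq_integral_Ioo,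
      ← intervalIntegral.integral_of_le haε.le,
      intervalIntegral.integral_const_mul,
      integral_rpow (Or.inr ⟨by intro h; exact hQne (by linarith), by
        rw [Set.uIcc_of_le haε.le]
        simp only [Set.mem_Icc, not_and, not_le]
        intro h1; linarith⟩)]
    have h1 : -Q - 1 + 1 = -Q := by ring
    rw [h1]
    rw [div_neg, mul_neg, mul_div_assoc', mul_comm, mul_div_cancel_right₀ _ hQne]
    ring
  -- integrability of the kernel on Ioo a ε
  have hker : ∀ a : ℝ, 0 < a → a < ε →
      IntegrableOn (fun r : ℝ => Q * r ^ (-Q - 1)) (Set.Ioo a ε) := by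
    intro a ha haε
    have := (intervalIntegral.intervalIntegrable_rpow (r := -Q - 1) (a := a) (b := ε)
      (μ := volume) (Or.inr (by
        rw [Set.uIcc_of_le haε.le]
        simp only [Set.mem_Icc, not_and, not_le]
        intro h1; linarith))).1
    exact ((this.mono_set Set.Ioo_subset_Ioc_self).const_mul Q)
  -- lintegral version
  have hlin : ∀ a : ℝ, 0 < a → a < ε →
      (∫⁻ r in Set.Ioo a ε, ENNReal.ofReal (Q * r ^ (-Q - 1))) =
        ENNReal.ofReal (a ^ (-Q) - ε ^ (-Q)) := by
    intro a ha haε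
    rw [← ofReal_integral_eq_lintegral_ofReal (hker a ha haε)
      ((ae_restrict_iff' measurableSet_Ioo).2 (ae_of_all _ fun r hr => by
        have : (0:ℝ) < r := lt_trans ha hr.1
        positivity)), hIoo a ha haε]
  -- the product kernel
  set F : Ω × ℝ → ℝ≥0∞ :=
    fun p => Set.indicator {p : Ω × ℝ | ρf p.1 < p.2}
      (fun p => ENNReal.ofReal (Q * p.2 ^ (-Q - 1))) p with hF
  have hsetmeas : MeasurableSet {p : Ω × ℝ | ρf p.1 < p.2} :=
    measurableSet_lt (hρf.comp measurable_fst) measurable_snd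
  have hFmeas : Measurable F := by
    apply Measurable.indicator _ hsetmeas
    measurability
  -- the density measure
  set ν : Measure Ω := μ.withDensity (fun x => ENNReal.ofReal (g x)) with hν
  have hνfin : IsFiniteMeasure ν := isFiniteMeasure_withDensity_ofReal hgint.2
  have hUr : ∀ r : ℝ, MeasurableSet {x | ρf x < r} := fun r =>
    measurableSet_lt hρf measurable_const
  have hνUr : ∀ r : ℝ, ν {x | ρf x < r} = ∫⁻ x in {x | ρf x < r}, ENNReal.ofReal (g x) ∂μ :=
    fun r => withDensity_apply _ (hUr r)
  -- Tonelli swap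
  have hswap : (∫⁻ x, ∫⁻ r in Set.Ioo (0:ℝ) ε, F (x, r) ∂volume ∂ν) =
      ∫⁻ r in Set.Ioo (0:ℝ) ε, ∫⁻ x, F (x, r) ∂ν ∂volume :=
    lintegral_lintegral_swap (hFmeas.aemeasurable)
  -- inner r-integral
  have hinner : ∀ x, (∫⁻ r in Set.Ioo (0:ℝ) ε, F (x, r) ∂volume) =
      ENNReal.ofReal ((ρf x) ^ (-Q) - ε ^ (-Q)) := by
    intro x
    have hx := hρ x
    have : (fun r : ℝ => F (x, r)) = Set.indicator (Set.Ioi (ρf x))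
        (fun r => ENNReal.ofReal (Q * r ^ (-Q - 1))) := by
      funext r
      simp only [hF, Set.indicator, Set.mem_setOf_eq, Set.mem_Ioi]
    rw [this, lintegral_indicator measurableSet_Ioi, Measure.restrict_restrict measurableSet_Ioi]
    have hset : Set.Ioi (ρf x) ∩ Set.Ioo 0 ε = Set.Ioo (ρf x) ε := by
      ext r
      simp only [Set.mem_inter_iff, Set.mem_Ioi, Set.mem_Ioo]
      constructor
      · rintro ⟨h1, _, h3⟩; exact ⟨h1, h3⟩
      · rintro ⟨h1, h2⟩; exact ⟨h1, lt_trans hx.1 h1, h2⟩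
    rw [hset, hlin (ρf x) hx.1 hx.2]
  -- inner x-integral
  have hinnerx : ∀ r : ℝ, (∫⁻ x, F (x, r) ∂ν) =
      ENNReal.ofReal (Q * r ^ (-Q - 1)) * ν {x | ρf x < r} := by
    intro r
    have : (fun x => F (x, r)) = Set.indicator {x | ρf x < r}
        (fun _ => ENNReal.ofReal (Q * r ^ (-Q - 1))) := by
      funext x
      simp only [hF, Set.indicator, Set.mem_setOf_eq]
    rw [this, lintegral_indicator (hUr r), setLIntegral_const]
  -- LHS identification
  have hLHS : (∫ x, g x * ((ρf x) ^ (-Q) - ε ^ (-Q)) ∂μ) =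
      (∫⁻ x, ∫⁻ r in Set.Ioo (0:ℝ) ε, F (x, r) ∂volume ∂ν).toReal := by
    rw [integral_eq_lintegral_of_nonneg_ae
      (ae_of_all _ fun x => mul_nonneg (hgnn x) (hdiff x))
      ((hg.mul ((hρf.pow_const (-Q)).sub measurable_const)).aestronglyMeasurable)]
    congr 1
    have hwd := lintegral_withDensity_eq_lintegral_mul μ
      (f := fun x => ENNReal.ofReal (g x)) (ENNReal.measurable_ofReal.comp hg)
      (g := fun x => ENNReal.ofReal ((ρf x) ^ (-Q) - ε ^ (-Q)))
      (ENNReal.measurable_ofReal.comp ((hρf.pow_const (-Q)).sub measurable_const))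
    simp only [Pi.mul_apply] at hwd
    calc ∫⁻ x, ENNReal.ofReal (g x * ((ρf x) ^ (-Q) - ε ^ (-Q))) ∂μ
        = ∫⁻ x, ENNReal.ofReal (g x) * ENNReal.ofReal ((ρf x) ^ (-Q) - ε ^ (-Q)) ∂μ := lintegral_congr fun x => ENNReal.ofReal_mul (hgnn x)
      _ = ∫⁻ x, ENNReal.ofReal ((ρf x) ^ (-Q) - ε ^ (-Q)) ∂ν := hwd.symm
      _ = ∫⁻ x, ∫⁻ r in Set.Ioo (0:ℝ) ε, F (x, r) ∂volume ∂ν :=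
          lintegral_congr fun x => (hinner x).symm
  -- RHS identification
  have hgUr : ∀ r : ℝ, (∫ x in {x | ρf x < r}, g x ∂μ) = (ν {x | ρf x < r}).toReal := by
    intro r
    rw [integral_eq_lintegral_of_nonneg_ae (ae_of_all _ fun x => hgnn x)
      hg.aestronglyMeasurable, hνUr r]
  have hRHS : (∫ r in Set.Ioo (0:ℝ) ε, Q * r ^ (-Q - 1) * ∫ x in {x | ρf x < r}, g x ∂μ) =
      (∫⁻ r in Set.Ioo (0:ℝ) ε, ∫⁻ x, F (x, r) ∂ν ∂volume).toReal := by
    have hmeasν : Measurable fun r : ℝ => ∫⁻ x, F (x, r) ∂ν :=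
      Measurable.lintegral_prod_left hFmeas
    have hcong : ∀ᵐ r ∂(volume.restrict (Set.Ioo (0:ℝ) ε)),
        Q * r ^ (-Q - 1) * (∫ x in {x | ρf x < r}, g x ∂μ) =
          (ENNReal.ofReal (Q * r ^ (-Q - 1)) * ν {x | ρf x < r}).toReal := by
      refine (ae_restrict_iff' measurableSet_Ioo).2 (ae_of_all _ fun r hr => ?_)
      have h0r : (0:ℝ) < r := hr.1
      rw [hgUr r, ENNReal.toReal_mul, ENNReal.toReal_ofReal (by positivity)]
    rw [integral_congr_ae hcong]
    rw [integral_eq_lintegral_of_nonneg_ae (ae_of_all _ fun r => ENNReal.toReal_nonneg)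
      (by
        apply Measurable.aestronglyMeasurable
        apply ENNReal.measurable_toReal.comp
        simp_rw [← hinnerx]
        exact hmeasν)]
    congr 1
    apply lintegral_congr_ae
    refine (ae_restrict_iff' measurableSet_Ioo).2 (ae_of_all _ fun r hr => ?_)
    beta_reduce
    rw [hinnerx r, ENNReal.ofReal_toReal]
    exact ENNReal.mul_ne_top ENNReal.ofReal_ne_top (measure_ne_top ν _)
  rw [hLHS, hRHS, hswap]

lemma max_sub_max14 (a : ℝ) : max a 0 - max (-a) 0 = a := by
  rcases le_total a 0 with h | h
  · rw [max_eq_right h, max_eq_left (by linarith)]; ring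
  · rw [max_eq_left h, max_eq_right (by linarith)]; ring

theorem stmt14 {Ω : Type*} [MeasurableSpace Ω] (μ : Measure Ω)
    (Q ε : ℝ) (hQ : 2 ≤ Q) (hε : 0 < ε)
    (J ρf : Ω → ℝ) (hJ : Measurable J) (hρf : Measurable ρf)
    (hρ : ∀ x, ρf x ∈ Set.Ioo 0 ε)
    (hJint : Integrable J μ)
    (hplus : Integrable (fun x => max (J x) 0 * ((ρf x) ^ (-Q) - ε ^ (-Q))) μ)
    (hminus : Integrable (fun x => max (-J x) 0 * ((ρf x) ^ (-Q) - ε ^ (-Q))) μ)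
    (heq : ∀ᵐ r ∂(volume.restrict (Set.Ioo (0:ℝ) ε)),
      (∫ x in {x | ρf x < r}, max (J x) 0 ∂μ) =
        ∫ x in {x | ρf x < r}, max (-J x) 0 ∂μ) :
    ((∫ x, max (J x) 0 * ((ρf x) ^ (-Q) - ε ^ (-Q)) ∂μ) =
        ∫ r in Set.Ioo (0:ℝ) ε,
          Q * r ^ (-Q - 1) * ∫ x in {x | ρf x < r}, max (J x) 0 ∂μ) ∧
    ((∫ x, max (-J x) 0 * ((ρf x) ^ (-Q) - ε ^ (-Q)) ∂μ) =
        ∫ r in Set.Ioo (0:ℝ) ε,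
          Q * r ^ (-Q - 1) * ∫ x in {x | ρf x < r}, max (-J x) 0 ∂μ) ∧
    (∫ x, J x * (ρf x) ^ (-Q) ∂μ) = ε ^ (-Q) * ∫ x, J x ∂μ := by
  have hQ0 : (0:ℝ) < Q := by linarith
  have h1 := layer14 μ Q ε hQ0 hε (fun x => max (J x) 0) ρf
    (hJ.max measurable_const) (fun x => le_max_right _ _) hρf hρ
    (hJint.pos_part)
  have h2 := layer14 μ Q ε hQ0 hε (fun x => max (-J x) 0) ρf
    (hJ.neg.max measurable_const) (fun x => le_max_right _ _) hρf hρ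
    (hJint.neg.pos_part)
  refine ⟨h1, h2, ?_⟩
  -- the two layer-cake integrals are equal by heq
  have hrhs_eq : (∫ r in Set.Ioo (0:ℝ) ε,
        Q * r ^ (-Q - 1) * ∫ x in {x | ρf x < r}, max (J x) 0 ∂μ) =
      ∫ r in Set.Ioo (0:ℝ) ε,
        Q * r ^ (-Q - 1) * ∫ x in {x | ρf x < r}, max (-J x) 0 ∂μ := by
    apply integral_congr_ae
    filter_upwards [heq] with r hr
    rw [hr]
  have hPM : (∫ x, max (J x) 0 * ((ρf x) ^ (-Q) - ε ^ (-Q)) ∂μ) =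
      ∫ x, max (-J x) 0 * ((ρf x) ^ (-Q) - ε ^ (-Q)) ∂μ := by
    rw [h1, h2, hrhs_eq]
  -- integrability of J * (ρ^{-Q} - ε^{-Q})
  have hfun : (fun x => J x * ((ρf x) ^ (-Q) - ε ^ (-Q))) =
      fun x => max (J x) 0 * ((ρf x) ^ (-Q) - ε ^ (-Q)) -
        max (-J x) 0 * ((ρf x) ^ (-Q) - ε ^ (-Q)) := by
    funext x
    rw [← sub_mul, max_sub_max14]
  have hJd : Integrable (fun x => J x * ((ρf x) ^ (-Q) - ε ^ (-Q))) μ := by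
    rw [hfun]; exact hplus.sub hminus
  have hJd0 : (∫ x, J x * ((ρf x) ^ (-Q) - ε ^ (-Q)) ∂μ) = 0 := by
    rw [hfun, integral_sub hplus hminus, hPM, sub_self]
  have hsplit : (fun x => J x * (ρf x) ^ (-Q)) =
      fun x => J x * ((ρf x) ^ (-Q) - ε ^ (-Q)) + J x * ε ^ (-Q) := by
    funext x; ring
  rw [hsplit, integral_add hJd (hJint.mul_const _), hJd0, zero_add,
    integral_mul_const, mul_comm]
end
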